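/- The product of permutations w = (s_i s_{i+1} ⋯ s_{u⁻¹(i)-1})(s_{i-1} ⋯ s_{u⁻¹(i-1)-1})⋯(s_1 ⋯ s_{u⁻¹(1)-1}) equals u, whenever u is a permutation of {1,…,n} satisfying u⁻¹(1) < ⋯ < u⁻¹(i) and u⁻¹(i+1) < ⋯ < u⁻¹(n), where s_j denotes the adjacent transposition (j, j+1). -/
import Mathlib


/-- The adjacent transposition swapping `b` and `b+1` (0-indexed) in `S_n`,
taken to be the identity if out of range. -/
def adjSwap (n : ℕ) (b : ℕ) : Equiv.Perm (Fin n) :=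
  if h : b + 1 < n then Equiv.swap ⟨b, Nat.lt_of_succ_lt h⟩ ⟨b + 1, h⟩ else 1

lemma cycleProd_aux {n : ℕ} (d : ℕ) : ∀ j, j + d < n → ∀ x : Fin n,
    ((((List.range' j d).map (adjSwap n)).prod x : Fin n) : ℕ) =
      if (x : ℕ) = j + d then j
      else if j ≤ (x : ℕ) ∧ (x : ℕ) < j + d then (x : ℕ) + 1 else (x : ℕ) := by
  induction d with
  | zero =>
    intro j hj x
    simp only [List.range'_zero, List.map_nil, List.prod_nil, Equiv.Perm.one_apply]
    split_ifs <;> omega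
  | succ d ih =>
    intro j hj x
    rw [List.range'_succ, List.map_cons, List.prod_cons, Equiv.Perm.mul_apply]
    have hrest := ih (j + 1) (by omega) x
    have hj1 : j + 1 < n := by omega
    have : adjSwap n j = Equiv.swap ⟨j, Nat.lt_of_succ_lt hj1⟩ ⟨j + 1, hj1⟩ := by
      simp [adjSwap, hj1]
    rw [this, Equiv.swap_apply_def]
    split_ifs with e1 e2 <;>
      rw [Fin.ext_iff] at * <;> simp only [] at * <;>
      · simp only [hrest] at *
        split_ifs at * <;> omega

lemma cycleProd_apply {n : ℕ} {j m : ℕ} (hjm : j ≤ m) (hm : m < n) (x : Fin n) :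
    ((((List.range' j (m - j)).map (adjSwap n)).prod x : Fin n) : ℕ) =
      if (x : ℕ) = m then j
      else if j ≤ (x : ℕ) ∧ (x : ℕ) < m then (x : ℕ) + 1 else (x : ℕ) := by
  have h := cycleProd_aux (m - j) j (by omega) x
  rw [show j + (m - j) = m by omega] at h
  exact h

lemma card_val_filter {n : ℕ} (p : Fin n → Prop) [DecidablePred p] (s : Finset ℕ)
    (h : ∀ x : Fin n, p x ↔ (x : ℕ) ∈ s) (hs : ∀ a ∈ s, a < n) :
    (Finset.univ.filter p).card = s.card := by
  rw [← Finset.card_image_of_injective (Finset.univ.filter p) Fin.val_injective]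
  congr 1
  ext a
  simp only [Finset.mem_image, Finset.mem_filter, Finset.mem_univ, true_and]
  constructor
  · rintro ⟨x, hx, rfl⟩; exact (h x).1 hx
  · intro ha; exact ⟨⟨a, hs a ha⟩, (h _).2 ha, rfl⟩

lemma le_apply_inv {n : ℕ} (u : Equiv.Perm (Fin n)) (i : ℕ)
    (h1 : ∀ j k : Fin n, (j : ℕ) < i + 1 → (k : ℕ) < i + 1 → j < k → u⁻¹ j < u⁻¹ k) :
    ∀ j (hj : j < n), j ≤ i → j ≤ ((u⁻¹ (⟨j, hj⟩ : Fin n) : Fin n) : ℕ) := by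
  intro j
  induction j with
  | zero => intro hj _; exact Nat.zero_le _
  | succ j ih =>
    intro hj hji
    have hj' : j < n := by omega
    have h0 := ih hj' (by omega)
    have hlt : u⁻¹ (⟨j, hj'⟩ : Fin n) < u⁻¹ (⟨j + 1, hj⟩ : Fin n) :=
      h1 _ _ (by simp; omega) (by simp; omega) (by rw [Fin.lt_def]; simp)
    rw [Fin.lt_def] at hlt
    omega

lemma key_count {n : ℕ} (u : Equiv.Perm (Fin n)) (i : ℕ) (hin : i < n)
    (h1 : ∀ j k : Fin n, (j : ℕ) < i + 1 → (k : ℕ) < i + 1 → j < k → u⁻¹ j < u⁻¹ k)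
    (h2 : ∀ j k : Fin n, i + 1 ≤ (j : ℕ) → i + 1 ≤ (k : ℕ) → j < k → u⁻¹ j < u⁻¹ k)
    (k : Fin n) (hk : i + 1 ≤ (k : ℕ)) :
    (((u⁻¹ k : Fin n) : ℕ) < ((u⁻¹ (⟨i, hin⟩ : Fin n) : Fin n) : ℕ) ↔
      (k : ℕ) ≤ ((u⁻¹ (⟨i, hin⟩ : Fin n) : Fin n) : ℕ)) := by
  classical
  have him : i ≤ ((u⁻¹ (⟨i, hin⟩ : Fin n) : Fin n) : ℕ) := le_apply_inv u i h1 i hin le_rfl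
  set m : ℕ := ((u⁻¹ (⟨i, hin⟩ : Fin n) : Fin n) : ℕ) with hm
  clear_value m
  have hmn : m < n := by rw [hm]; exact (u⁻¹ (⟨i, hin⟩ : Fin n)).isLt
  have hinj : ∀ x : Fin n, ((u⁻¹ x : Fin n) : ℕ) = m → x = (⟨i, hin⟩ : Fin n) := by
    intro x hx
    have : u⁻¹ x = u⁻¹ (⟨i, hin⟩ : Fin n) := Fin.ext (by omega)
    exact (Equiv.injective u⁻¹) this
  have hScard : (Finset.univ.filter fun x : Fin n => ((u⁻¹ x : Fin n) : ℕ) < m).card = m := by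
    have hSim : (Finset.univ.filter fun x : Fin n => ((u⁻¹ x : Fin n) : ℕ) < m)
        = Finset.image u (Finset.univ.filter fun y : Fin n => (y : ℕ) < m) := by
      ext x
      simp only [Finset.mem_filter, Finset.mem_univ, true_and, Finset.mem_image]
      constructor
      · intro hx; exact ⟨u⁻¹ x, hx, u.apply_symm_apply x⟩
      · rintro ⟨y, hy, rfl⟩; simpa using hy
    rw [hSim, Finset.card_image_of_injective _ u.injective,
      card_val_filter _ (Finset.range m) (by intro x; simp) (by intro a ha; simp at ha; omega)]
    exact Finset.card_range m
  have hTcard : (Finset.univ.filter fun x : Fin n =>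
      i + 1 ≤ (x : ℕ) ∧ ((u⁻¹ x : Fin n) : ℕ) < m).card = m - i := by
    have hsplit := Finset.card_filter_add_card_filter_not
      (s := Finset.univ.filter fun x : Fin n => ((u⁻¹ x : Fin n) : ℕ) < m)
      (p := fun x : Fin n => (x : ℕ) < i + 1)
    have e1 : (Finset.univ.filter fun x : Fin n => ((u⁻¹ x : Fin n) : ℕ) < m).filter
        (fun x : Fin n => (x : ℕ) < i + 1)
        = Finset.univ.filter fun x : Fin n => (x : ℕ) < i := by
      ext x
      simp only [Finset.mem_filter, Finset.mem_univ, true_and, Finset.filter_filter]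
      constructor
      · rintro ⟨hu', hxi⟩
        rcases Nat.lt_or_ge (x : ℕ) i with h | h
        · exact h
        · exfalso
          have hx : x = (⟨i, hin⟩ : Fin n) := Fin.ext (show (x : ℕ) = i by omega)
          rw [hx, ← hm] at hu'; omega
      · intro hxi
        have hlt : u⁻¹ x < u⁻¹ (⟨i, hin⟩ : Fin n) :=
          h1 _ _ (by omega) (by simp) (by rw [Fin.lt_def]; simp; omega)
        rw [Fin.lt_def] at hlt
        constructor
        · omega
        · omega
    have e2 : (Finset.univ.filter fun x : Fin n => ((u⁻¹ x : Fin n) : ℕ) < m).filter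
        (fun x : Fin n => ¬ (x : ℕ) < i + 1)
        = Finset.univ.filter fun x : Fin n =>
            i + 1 ≤ (x : ℕ) ∧ ((u⁻¹ x : Fin n) : ℕ) < m := by
      ext x
      simp only [Finset.mem_filter, Finset.mem_univ, true_and, Finset.filter_filter]
      constructor
      · rintro ⟨a, b⟩; exact ⟨by omega, a⟩
      · rintro ⟨a, b⟩; exact ⟨b, by omega⟩
    have e1c : (Finset.univ.filter fun x : Fin n => (x : ℕ) < i).card = i := by
      rw [card_val_filter _ (Finset.range i) (by intro x; simp) (by intro a ha; simp at ha; omega)]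
      exact Finset.card_range i
    rw [e1, e2, e1c, hScard] at hsplit
    omega
  constructor
  · intro hlt
    by_contra hgt
    push_neg at hgt
    have hsub : (Finset.univ.filter fun x : Fin n => i + 1 ≤ (x : ℕ) ∧ (x : ℕ) ≤ (k : ℕ))
        ⊆ Finset.univ.filter fun x : Fin n =>
            i + 1 ≤ (x : ℕ) ∧ ((u⁻¹ x : Fin n) : ℕ) < m := by
      intro x hx
      simp only [Finset.mem_filter, Finset.mem_univ, true_and] at hx ⊢
      refine ⟨hx.1, ?_⟩
      rcases Nat.lt_or_ge (x : ℕ) (k : ℕ) with h | h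
      · have hxx : u⁻¹ x < u⁻¹ k := h2 _ _ hx.1 hk (by rw [Fin.lt_def]; omega)
        rw [Fin.lt_def] at hxx; omega
      · have hxk : x = k := Fin.ext (by omega)
        rw [hxk]; exact hlt
    have hcs : (Finset.univ.filter fun x : Fin n =>
        i + 1 ≤ (x : ℕ) ∧ (x : ℕ) ≤ (k : ℕ)).card = (k : ℕ) - i := by
      rw [card_val_filter _ (Finset.Ico (i + 1) ((k : ℕ) + 1))
        (by intro x; simp only [Finset.mem_Ico]; try omega)
        (by intro a ha; simp only [Finset.mem_Ico] at ha; have := k.isLt; omega)]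
      rw [Nat.card_Ico]; omega
    have hcc := Finset.card_le_card hsub
    rw [hcs, hTcard] at hcc
    omega
  · intro hle
    by_contra hge
    push_neg at hge
    have hne : ((u⁻¹ k : Fin n) : ℕ) ≠ m := by
      intro h
      have hk2 := hinj k h
      rw [hk2] at hk; simp at hk
    have hsub : (Finset.univ.filter fun x : Fin n =>
          i + 1 ≤ (x : ℕ) ∧ ((u⁻¹ x : Fin n) : ℕ) < m)
        ⊆ Finset.univ.filter fun x : Fin n => i + 1 ≤ (x : ℕ) ∧ (x : ℕ) < (k : ℕ) := by
      intro x hx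
      simp only [Finset.mem_filter, Finset.mem_univ, true_and] at hx ⊢
      refine ⟨hx.1, ?_⟩
      by_contra hxk
      push_neg at hxk
      rcases Nat.lt_or_ge (k : ℕ) (x : ℕ) with h | h
      · have hxx : u⁻¹ k < u⁻¹ x := h2 _ _ hk hx.1 (by rw [Fin.lt_def]; omega)
        rw [Fin.lt_def] at hxx; omega
      · have hxk2 : x = k := Fin.ext (by omega)
        rw [hxk2] at hx; omega
    have hcs : (Finset.univ.filter fun x : Fin n =>
        i + 1 ≤ (x : ℕ) ∧ (x : ℕ) < (k : ℕ)).card = (k : ℕ) - (i + 1) := by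
      rw [card_val_filter _ (Finset.Ico (i + 1) (k : ℕ))
        (by intro x; simp only [Finset.mem_Ico]; try omega)
        (by intro a ha; simp only [Finset.mem_Ico] at ha; have := k.isLt; omega)]
      rw [Nat.card_Ico]
    have hcc := Finset.card_le_card hsub
    rw [hcs, hTcard] at hcc
    omega

theorem main_aux {n : ℕ} : ∀ (i : ℕ) (u : Equiv.Perm (Fin n)), i ≤ n →
    (∀ j k : Fin n, (j : ℕ) < i → (k : ℕ) < i → j < k → u⁻¹ j < u⁻¹ k) →
    (∀ j k : Fin n, i ≤ (j : ℕ) → i ≤ (k : ℕ) → j < k → u⁻¹ j < u⁻¹ k) →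
    (((List.range i).reverse.map (fun j : ℕ =>
        if hj : j < n then
          ((List.range' j (((u⁻¹ (⟨j, hj⟩ : Fin n) : Fin n) : ℕ) - j)).map (adjSwap n)).prod
        else 1)).prod : Equiv.Perm (Fin n)) = u := by
  intro i
  induction i with
  | zero =>
    intro u _ h1 h2
    simp only [List.range_zero, List.reverse_nil, List.map_nil, List.prod_nil]
    have hmono : StrictMono (⇑(u⁻¹) : Fin n → Fin n) := by
      intro a b hab
      exact h2 a b (Nat.zero_le _) (Nat.zero_le _) hab
    have hid : (⇑(u⁻¹) : Fin n → Fin n) = id := by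
      refine (@StrictMono.range_inj (Fin n) (Fin n) Fin.instLinearOrder inferInstance
        (inferInstanceAs (WellFoundedLT (Fin n))) _ (id : Fin n → Fin n) hmono
        strictMono_id).1 ?_
      rw [(u⁻¹).surjective.range_eq, Set.range_id]
    have huinv : u⁻¹ = 1 := Equiv.ext fun x => congrFun hid x
    exact (inv_eq_one.mp huinv).symm
  | succ i ih =>
    intro u hi h1 h2
    have hin : i < n := by omega
    have him : i ≤ ((u⁻¹ (⟨i, hin⟩ : Fin n) : Fin n) : ℕ) := le_apply_inv u i h1 i hin le_rfl
    set m : ℕ := ((u⁻¹ (⟨i, hin⟩ : Fin n) : Fin n) : ℕ) with hm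
    have hmn : m < n := (u⁻¹ (⟨i, hin⟩ : Fin n)).isLt
    set F : Equiv.Perm (Fin n) := ((List.range' i (m - i)).map (adjSwap n)).prod with hFdef
    have hF : ∀ x : Fin n, ((F x : Fin n) : ℕ) =
        if (x : ℕ) = m then i
        else if i ≤ (x : ℕ) ∧ (x : ℕ) < m then (x : ℕ) + 1 else (x : ℕ) :=
      fun x => cycleProd_apply him hmn x
    set u' : Equiv.Perm (Fin n) := F⁻¹ * u with hu'def
    have hu'inv : ∀ x : Fin n, u'⁻¹ x = u⁻¹ (F x) := by
      intro x; rw [hu'def, mul_inv_rev, inv_inv, Equiv.Perm.mul_apply]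
    have hfix : ∀ x : Fin n, (x : ℕ) < i → F x = x := by
      intro x hx
      refine Fin.ext ?_
      rw [hF x]
      split_ifs <;> omega
    -- hypotheses for u'
    have h1' : ∀ j k : Fin n, (j : ℕ) < i → (k : ℕ) < i → j < k → u'⁻¹ j < u'⁻¹ k := by
      intro j k hj hk hjk
      rw [hu'inv, hu'inv, hfix j hj, hfix k hk]
      exact h1 j k (by omega) (by omega) hjk
    have h2' : ∀ j k : Fin n, i ≤ (j : ℕ) → i ≤ (k : ℕ) → j < k → u'⁻¹ j < u'⁻¹ k := by
      intro j k hj hk hjk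
      rw [hu'inv, hu'inv, Fin.lt_def]
      rw [Fin.lt_def] at hjk
      have hFj := hF j
      have hFk := hF k
      have key := key_count u i hin h1 h2
      by_cases hjm : (j : ℕ) = m
      · -- then k > m, F j = ⟨i⟩, F k = k
        have hFj' : F j = (⟨i, hin⟩ : Fin n) := Fin.ext (by rw [hFj]; simp [hjm])
        have hFk' : F k = k := Fin.ext (by rw [hFk]; split_ifs <;> omega)
        rw [hFj', hFk', ← hm]
        have hknot := (key k (by omega)).not
        push_neg at hknot
        have hge : m ≤ ((u⁻¹ k : Fin n) : ℕ) := by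
          rcases Nat.lt_or_ge ((u⁻¹ k : Fin n) : ℕ) m with h | h
          · exfalso; have := (key k (by omega)).1 h; omega
          · exact h
        have hne : ((u⁻¹ k : Fin n) : ℕ) ≠ m := by
          intro h
          have : u⁻¹ k = u⁻¹ (⟨i, hin⟩ : Fin n) := Fin.ext (by omega)
          have := (Equiv.injective u⁻¹) this
          rw [this] at hk hjk
          simp at hjk
          omega
        omega
      · by_cases hjlt : (j : ℕ) < m
        · have hFj' : ((F j : Fin n) : ℕ) = (j : ℕ) + 1 := by rw [hFj]; split_ifs <;> omega
          by_cases hkm : (k : ℕ) = m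
          · have hFk' : F k = (⟨i, hin⟩ : Fin n) := Fin.ext (by rw [hFk]; simp [hkm])
            rw [hFk', ← hm]
            have : ((u⁻¹ (F j) : Fin n) : ℕ) < m := by
              refine (key (F j) (by omega)).2 (by omega)
            omega
          · by_cases hklt : (k : ℕ) < m
            · have hFk' : ((F k : Fin n) : ℕ) = (k : ℕ) + 1 := by rw [hFk]; split_ifs <;> omega
              have := h2 (F j) (F k) (by omega) (by omega) (by rw [Fin.lt_def]; omega)
              rw [Fin.lt_def] at this; exact this
            · have hFk' : F k = k := Fin.ext (by rw [hFk]; split_ifs <;> omega)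
              rw [hFk']
              have := h2 (F j) k (by omega) (by omega) (by rw [Fin.lt_def]; omega)
              rw [Fin.lt_def] at this; exact this
        · -- j > m
          have hFj' : F j = j := Fin.ext (by rw [hFj]; split_ifs <;> omega)
          have hFk' : F k = k := Fin.ext (by rw [hFk]; split_ifs <;> omega)
          rw [hFj', hFk']
          have := h2 j k (by omega) (by omega) (by rw [Fin.lt_def]; omega)
          rw [Fin.lt_def] at this; exact this
    have hIH := ih u' (by omega) h1' h2'
    -- the words for u' and u at level i coincide
    have hwords : ((List.range i).reverse.map (fun j : ℕ =>
        if hj : j < n then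
          ((List.range' j (((u'⁻¹ (⟨j, hj⟩ : Fin n) : Fin n) : ℕ) - j)).map (adjSwap n)).prod
        else 1)) = ((List.range i).reverse.map (fun j : ℕ =>
        if hj : j < n then
          ((List.range' j (((u⁻¹ (⟨j, hj⟩ : Fin n) : Fin n) : ℕ) - j)).map (adjSwap n)).prod
        else 1)) := by
      refine List.map_congr_left ?_
      intro j hj
      rw [List.mem_reverse, List.mem_range] at hj
      have hjn : j < n := by omega
      rw [dif_pos hjn, dif_pos hjn]
      rw [hu'inv, hfix _ (by simpa using hj)]
    -- peel off the top factor
    rw [List.range_succ, List.reverse_append, List.reverse_singleton, List.singleton_append,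
      List.map_cons, List.prod_cons, dif_pos hin, ← hm, ← hFdef, ← hwords, hIH, hu'def]
    group

/-- The canonical reduced expression for a minimal length coset representative:
`u = (s_i ⋯ s_{u⁻¹(i)-1})(s_{i-1} ⋯ s_{u⁻¹(i-1)-1}) ⋯ (s_1 ⋯ s_{u⁻¹(1)-1})`,
written 0-indexed: the factor for `j` (with `j < i`) is the product of the adjacent
transpositions `adjSwap n b` for `b` from `j` to `u⁻¹(j) - 1`, and the factors are
multiplied with `j` going from `i-1` down to `0`. -/
theorem canonical_word_eq_min_coset_rep {n : ℕ} (u : Equiv.Perm (Fin n)) (i : ℕ) (hi : i ≤ n)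
    (h1 : ∀ j k : Fin n, (j : ℕ) < i → (k : ℕ) < i → j < k → u⁻¹ j < u⁻¹ k)
    (h2 : ∀ j k : Fin n, i ≤ (j : ℕ) → i ≤ (k : ℕ) → j < k → u⁻¹ j < u⁻¹ k) :
    (((List.range i).reverse.map (fun j : ℕ =>
        if hj : j < n then
          ((List.range' j (((u⁻¹ (⟨j, hj⟩ : Fin n) : Fin n) : ℕ) - j)).map (adjSwap n)).prod
        else 1)).prod : Equiv.Perm (Fin n)) = u := by
  exact main_aux i u hi h1 h2
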